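/- Let m > 0 and n ≥ 1. There exists a unique value p⁽ⁿ⁾ > 0 such that for all P ∈ ℝ^d one has ½|P|² ≥ E₀⁽ⁿ⁾(P) if and only if |P| ≥ p⁽ⁿ⁾; moreover the map |P| ↦ ½|P|² − E₀⁽ⁿ⁾(P) is strictly increasing in |P|, unbounded above, and equals −mn at P = 0. -/
import Mathlib

/-- Existence and uniqueness of the critical momentum `p⁽ⁿ⁾ > 0` with
`½|P|² ≥ E₀⁽ⁿ⁾(P) ↔ |P| ≥ p⁽ⁿ⁾`; moreover `|P| ↦ ½|P|² − E₀⁽ⁿ⁾(P)` is strictly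
increasing, unbounded above, and equals `−mn` at `P = 0`. -/
theorem critical_momentum
    (d : ℕ) (hd : 1 ≤ d) (m : ℝ) (hm : 0 < m) (n : ℕ) (hn : 1 ≤ n)
    (c : ℝ → ℝ)
    (hc : ∀ p : ℝ, 0 ≤ p → c p ∈ Set.Ico (0 : ℝ) 1 ∧
      c p = (p - c p) / Real.sqrt (m ^ 2 * (n : ℝ) ^ 2 + (p - c p) ^ 2))
    (E : ℝ → ℝ)
    (hE : ∀ p : ℝ, E p =
      (c p) ^ 2 / 2 + Real.sqrt (m ^ 2 * (n : ℝ) ^ 2 + (p - c p) ^ 2)) :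
    (∃! pn : ℝ, 0 < pn ∧
      ∀ P : EuclideanSpace ℝ (Fin d), E ‖P‖ ≤ ‖P‖ ^ 2 / 2 ↔ pn ≤ ‖P‖) ∧
    StrictMonoOn (fun p => p ^ 2 / 2 - E p) (Set.Ici 0) ∧
    (∀ M : ℝ, ∃ p : ℝ, 0 ≤ p ∧ M < p ^ 2 / 2 - E p) ∧
    (0 : ℝ) ^ 2 / 2 - E 0 = -(m * n) := by
  have hn' : (1:ℝ) ≤ (n:ℝ) := by exact_mod_cast hn
  set a : ℝ := m ^ 2 * (n : ℝ) ^ 2 with ha_def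
  have ha : 0 < a := by positivity
  have hsqa : Real.sqrt a = m * n := by
    rw [ha_def, show m ^ 2 * (n:ℝ)^2 = (m * n)^2 by ring, Real.sqrt_sq (by positivity)]
  have hs_pos : ∀ x : ℝ, 0 < Real.sqrt (a + x ^ 2) := fun x => Real.sqrt_pos.2 (by positivity)
  have hs_sq : ∀ x : ℝ, (Real.sqrt (a + x ^ 2)) ^ 2 = a + x ^ 2 :=
    fun x => Real.sq_sqrt (by positivity)
  have hs_mono : ∀ x y : ℝ, 0 ≤ x → x ≤ y →
      Real.sqrt (a + x ^ 2) ≤ Real.sqrt (a + y ^ 2) := by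
    intro x y hx hxy; exact Real.sqrt_le_sqrt (by nlinarith)
  -- monotonicity of ψ x = x²/2 - a/√(a+x²)
  have hψmono : ∀ x y : ℝ, 0 ≤ x → x < y →
      x ^ 2 / 2 - a / Real.sqrt (a + x ^ 2) < y ^ 2 / 2 - a / Real.sqrt (a + y ^ 2) := by
    intro x y hx hxy
    have h2 : a / Real.sqrt (a + y ^ 2) ≤ a / Real.sqrt (a + x ^ 2) :=
      div_le_div_of_nonneg_left ha.le (hs_pos x) (hs_mono x y hx hxy.le)
    nlinarith
  -- monotonicity of x ↦ x/√(a+x²)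
  have hdiv_mono : ∀ x y : ℝ, 0 ≤ x → x ≤ y →
      x / Real.sqrt (a + x ^ 2) ≤ y / Real.sqrt (a + y ^ 2) := by
    intro x y hx hxy
    rcases eq_or_lt_of_le hx with h0 | h0
    · have : x / Real.sqrt (a + x ^ 2) = 0 := by rw [← h0]; simp
      rw [this]
      exact div_nonneg (hx.trans hxy) (hs_pos y).le
    · have hy : 0 < y := h0.trans_le hxy
      rw [div_le_div_iff₀ (hs_pos x) (hs_pos y)]
      have hsq2 : (x * Real.sqrt (a + y ^ 2)) ^ 2 ≤ (y * Real.sqrt (a + x ^ 2)) ^ 2 := by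
        nlinarith [hs_sq x, hs_sq y,
          mul_le_mul_of_nonneg_left (mul_le_mul hxy hxy hx hy.le) ha.le]
      calc x * Real.sqrt (a + y ^ 2)
          = Real.sqrt ((x * Real.sqrt (a + y ^ 2)) ^ 2) :=
            (Real.sqrt_sq (by positivity)).symm
        _ ≤ Real.sqrt ((y * Real.sqrt (a + x ^ 2)) ^ 2) := Real.sqrt_le_sqrt hsq2
        _ = y * Real.sqrt (a + x ^ 2) := Real.sqrt_sq (by positivity)
  -- monotonicity of φ x = x + x/√(a+x²)
  have hφle : ∀ x y : ℝ, 0 ≤ x → x ≤ y →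
      x + x / Real.sqrt (a + x ^ 2) ≤ y + y / Real.sqrt (a + y ^ 2) :=
    fun x y hx hxy => add_le_add hxy (hdiv_mono x y hx hxy)
  have hφlt : ∀ x y : ℝ, 0 ≤ x → x < y →
      x + x / Real.sqrt (a + x ^ 2) < y + y / Real.sqrt (a + y ^ 2) :=
    fun x y hx hxy => add_lt_add_of_lt_of_le hxy (hdiv_mono x y hx hxy.le)
  -- key structural lemma
  have hkey : ∀ p : ℝ, 0 ≤ p →
      0 ≤ p - c p ∧
      (p - c p) + (p - c p) / Real.sqrt (a + (p - c p) ^ 2) = p ∧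
      p ^ 2 / 2 - E p = (p - c p) ^ 2 / 2 - a / Real.sqrt (a + (p - c p) ^ 2) := by
    intro p hp
    obtain ⟨⟨hc0, hc1⟩, hceq⟩ := hc p hp
    have hsne := (hs_pos (p - c p)).ne'
    rw [eq_div_iff hsne] at hceq
    -- hceq : c p * √(a + (p - c p)^2) = p - c p
    have hx0 : 0 ≤ p - c p := by
      rw [← hceq]; exact mul_nonneg hc0 (hs_pos _).le
    have hdiv : (p - c p) / Real.sqrt (a + (p - c p) ^ 2) = c p := by
      rw [div_eq_iff hsne]; exact hceq.symm
    refine ⟨hx0, by rw [hdiv]; ring, ?_⟩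
    rw [hE p]
    have hadiv : a / Real.sqrt (a + (p - c p) ^ 2) =
        Real.sqrt (a + (p - c p) ^ 2) - (p - c p) * c p := by
      rw [eq_sub_iff_add_eq, div_add' _ _ _ hsne, div_eq_iff hsne]
      nlinarith [hs_sq (p - c p)]
    rw [hadiv]; ring
  -- the function ψ is continuous
  have hcont : Continuous (fun x : ℝ => x ^ 2 / 2 - a / Real.sqrt (a + x ^ 2)) := by
    apply Continuous.sub
    · exact (continuous_pow 2).div_const 2
    · exact continuous_const.div
        (Real.continuous_sqrt.comp (continuous_const.add (continuous_pow 2)))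
        (fun x => (hs_pos x).ne')
  have hbound : ∀ x : ℝ, a / Real.sqrt (a + x ^ 2) ≤ Real.sqrt a := by
    intro x
    have h1 : Real.sqrt a ≤ Real.sqrt (a + x ^ 2) :=
      Real.sqrt_le_sqrt (by nlinarith [sq_nonneg x])
    calc a / Real.sqrt (a + x ^ 2) ≤ a / Real.sqrt a :=
          div_le_div_of_nonneg_left ha.le (Real.sqrt_pos.2 ha) h1
      _ = Real.sqrt a := Real.div_sqrt
  -- find root x* of ψ
  set X : ℝ := Real.sqrt (2 * Real.sqrt a + 2) with hX_def
  have hX2 : X ^ 2 = 2 * Real.sqrt a + 2 := Real.sq_sqrt (by positivity)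
  have hψ0 : (0:ℝ) ^ 2 / 2 - a / Real.sqrt (a + 0 ^ 2) = - Real.sqrt a := by
    norm_num [Real.div_sqrt]
  have hψX : (0:ℝ) ≤ X ^ 2 / 2 - a / Real.sqrt (a + X ^ 2) := by
    have := hbound X
    linarith
  have hIvt := intermediate_value_Icc (Real.sqrt_nonneg (2 * Real.sqrt a + 2))
    hcont.continuousOn
  have h0mem : (0:ℝ) ∈ Set.Icc ((0:ℝ) ^ 2 / 2 - a / Real.sqrt (a + 0 ^ 2))
      (X ^ 2 / 2 - a / Real.sqrt (a + X ^ 2)) := by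
    constructor
    · rw [hψ0]; linarith [Real.sqrt_nonneg a]
    · exact hψX
  obtain ⟨x₀, hx₀mem, hx₀eq⟩ := hIvt h0mem
  have hx₀0 : 0 ≤ x₀ := hx₀mem.1
  have hx₀eq' : x₀ ^ 2 / 2 - a / Real.sqrt (a + x₀ ^ 2) = 0 := hx₀eq
  have hx₀pos : 0 < x₀ := by
    rcases eq_or_lt_of_le hx₀0 with h | h
    · exfalso
      rw [← h] at hx₀eq'
      rw [hψ0] at hx₀eq'
      have : 0 < Real.sqrt a := Real.sqrt_pos.2 ha
      linarith
    · exact h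
  set pn : ℝ := x₀ + x₀ / Real.sqrt (a + x₀ ^ 2) with hpn_def
  have hpn_pos : 0 < pn :=
    add_pos_of_pos_of_nonneg hx₀pos (div_nonneg hx₀0 (hs_pos x₀).le)
  -- main characterization
  have hmain : ∀ p : ℝ, 0 ≤ p → (E p ≤ p ^ 2 / 2 ↔ pn ≤ p) := by
    intro p hp
    obtain ⟨hx0, hφx, hF⟩ := hkey p hp
    constructor
    · intro hEp
      have hFnn : 0 ≤ (p - c p) ^ 2 / 2 - a / Real.sqrt (a + (p - c p) ^ 2) := by
        rw [← hF]; linarith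
      have hxx : x₀ ≤ p - c p := by
        by_contra hlt
        push_neg at hlt
        have := hψmono _ _ hx0 hlt
        rw [hx₀eq'] at this
        linarith
      calc pn ≤ (p - c p) + (p - c p) / Real.sqrt (a + (p - c p) ^ 2) :=
            hφle _ _ hx₀0 hxx
        _ = p := hφx
    · intro hpnp
      have hxx : x₀ ≤ p - c p := by
        by_contra hlt
        push_neg at hlt
        have := hφlt _ _ hx0 hlt
        rw [hφx, ← hpn_def] at this
        linarith
      have : 0 ≤ (p - c p) ^ 2 / 2 - a / Real.sqrt (a + (p - c p) ^ 2) := by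
        rcases eq_or_lt_of_le hxx with h | h
        · rw [← h, hx₀eq']
        · have := hψmono _ _ hx₀0 h
          linarith [hx₀eq']
      rw [← hF] at this
      linarith
  refine ⟨⟨pn, ⟨hpn_pos, fun P => hmain ‖P‖ (norm_nonneg P)⟩, ?_⟩, ?_, ?_, ?_⟩
  · -- uniqueness
    rintro q ⟨hq0, hq⟩
    have hnorm : ∀ r : ℝ, 0 ≤ r →
        ‖(EuclideanSpace.single (⟨0, hd⟩ : Fin d) r : EuclideanSpace ℝ (Fin d))‖ = r := by
      intro r hr
      rw [EuclideanSpace.norm_single, Real.norm_eq_abs, abs_of_nonneg hr]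
    have h1 : q ≤ pn := by
      have := hq (EuclideanSpace.single (⟨0, hd⟩ : Fin d) pn)
      rw [hnorm pn hpn_pos.le] at this
      exact this.1 ((hmain pn hpn_pos.le).2 le_rfl)
    have h2 : pn ≤ q := by
      have := hq (EuclideanSpace.single (⟨0, hd⟩ : Fin d) q)
      rw [hnorm q hq0.le] at this
      exact (hmain q hq0.le).1 (this.2 le_rfl)
    linarith
  · -- strict monotonicity
    intro p₁ hp₁ p₂ hp₂ h12
    simp only [Set.mem_Ici] at hp₁ hp₂
    obtain ⟨hx1, hφ1, hF1⟩ := hkey p₁ hp₁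
    obtain ⟨hx2, hφ2, hF2⟩ := hkey p₂ hp₂
    simp only
    rw [hF1, hF2]
    apply hψmono _ _ hx1
    by_contra hle
    push_neg at hle
    have := hφle _ _ hx2 hle
    rw [hφ1, hφ2] at this
    linarith
  · -- unbounded
    intro M
    set t : ℝ := Real.sqrt (2 * |M| + 2 * Real.sqrt a + 2) with ht_def
    have ht0 : 0 ≤ t := Real.sqrt_nonneg _
    have ht2 : t ^ 2 = 2 * |M| + 2 * Real.sqrt a + 2 :=
      Real.sq_sqrt (by positivity)
    refine ⟨1 + t, by linarith, ?_⟩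
    have hp0 : (0:ℝ) ≤ 1 + t := by linarith
    obtain ⟨hx0, hφx, hF⟩ := hkey (1 + t) hp0
    obtain ⟨⟨hc0, hc1⟩, _⟩ := hc (1 + t) hp0
    have htx : t < (1 + t) - c (1 + t) := by linarith
    have hstep : t ^ 2 / 2 - a / Real.sqrt (a + t ^ 2) <
        ((1 + t) - c (1 + t)) ^ 2 / 2 -
          a / Real.sqrt (a + ((1 + t) - c (1 + t)) ^ 2) :=
      hψmono _ _ ht0 htx
    have hb := hbound t
    have habs : M ≤ |M| := le_abs_self M
    rw [hF]
    linarith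
  · -- value at 0
    obtain ⟨hx0, hφ0, hF0⟩ := hkey 0 le_rfl
    have hdnn : 0 ≤ (0 - c 0) / Real.sqrt (a + (0 - c 0) ^ 2) :=
      div_nonneg hx0 (hs_pos _).le
    have hzero : 0 - c 0 = 0 := by linarith
    rw [hF0, hzero, hψ0, hsqa]
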